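/- arXiv:2501.09081 — 4 statements merged into one kernel-verified Lean document; each statement's English description precedes it below -/
import Mathlib

section
/- Let S be a type, let A be a finite nonempty type, let γ be a real number with 0 < γ, and let Q : S × A → ℝ, r : S × A → ℝ, and f : S × A → S satisfy the optimal Bellman equation Q(s,a) = r(s,a) + γ·max_{a' ∈ A} Q(f(s,a), a') for all s ∈ S, a ∈ A. Define V : S → ℝ by V(s) = max_{a ∈ A} Q(s,a). If V is injective, then for every s ∈ S and a ∈ A, the successor state f(s,a) is the unique x ∈ S such that V(x) = (Q(s,a) − r(s,a))/γ. -/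
/-- Optimal-policy instance of Proposition 1: under the optimal Bellman equation
with a finite nonempty action set, if `V s = max_a Q (s, a)` is injective then the
successor state is the unique state whose value equals the scanned value. -/
theorem stmt_1 {S A : Type*} [Fintype A] [Nonempty A] (γ : ℝ) (hγ : 0 < γ)
    (Q r : S × A → ℝ) (f : S × A → S)
    (hbell : ∀ s a, Q (s, a) =
      r (s, a) + γ * Finset.univ.sup' Finset.univ_nonempty (fun a' => Q (f (s, a), a')))
    (V : S → ℝ)
    (hV : ∀ s, V s = Finset.univ.sup' Finset.univ_nonempty (fun a => Q (s, a)))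
    (hinj : Function.Injective V) :
    ∀ (s : S) (a : A),
      V (f (s, a)) = (Q (s, a) - r (s, a)) / γ ∧
      ∀ x : S, V x = (Q (s, a) - r (s, a)) / γ → x = f (s, a) := by
  intro s a
  have h1 : V (f (s, a)) = (Q (s, a) - r (s, a)) / γ := by
    rw [hV, eq_div_iff hγ.ne']
    have := hbell s a
    linarith [this]
  exact ⟨h1, fun x hx => hinj (h1 ▸ hx)⟩
end

section
/- Let S be a metric space, A a type, γ ∈ (0,1), L > 0, and ε > 0. Let Q : S × A → ℝ, r : S × A → ℝ, V : S → ℝ, f : S × A → S satisfy Q(s,a) = r(s,a) + γ·V(f(s,a)) for all s, a, and suppose V is reverse Lipschitz with constant L, i.e. |V(s₁) − V(s₂)| > L·dist(s₁, s₂) for all s₁ ≠ s₂. Let Q̂ : S × A → ℝ and V̂ : S → ℝ satisfy |Q̂(s,a) − Q(s,a)| ≤ ε for all s, a and |V̂(x) − V(x)| ≤ ε for all x. If, for given s ∈ S and a ∈ A, the point ŝ' ∈ S satisfies V̂(ŝ') = (Q̂(s,a) − r(s,a))/γ, then dist(f(s,a), ŝ') < ((1 + γ)/(γ·L))·ε.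 -/
/-! The Bellman equation gives `V (f (s, a)) = (Q (s, a) - r (s, a)) / γ`, so `Vhat shat` misses
`V (f (s, a))` by at most `ε / γ`, and `V shat` misses `Vhat shat` by at most `ε`. Hence the true
values of `f (s, a)` and `shat` differ by at most `(1 + γ) ε / γ`, and reverse Lipschitz continuity
turns this value gap into a distance bound after dividing by `L`. -/

def ReverseLipschitzWith {S : Type*} [PseudoMetricSpace S] (L : ℝ) (V : S → ℝ) : Prop :=
  ∀ x y, x ≠ y → L * dist x y < |V x - V y|

theorem ReverseLipschitzWith.dist_lt_of_abs_sub_le {S : Type*} [PseudoMetricSpace S]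
    {L δ : ℝ} {V : S → ℝ} (hV : ReverseLipschitzWith L V) (hL : 0 < L) (hδ : 0 < δ)
    {x y : S} (h : |V x - V y| ≤ δ) : dist x y < δ / L := by
  rw [lt_div_iff₀ hL]
  by_cases hxy : x = y
  · simpa [hxy] using hδ
  · exact mul_comm L _ ▸ (hV x y hxy).trans_le h

theorem stmt_2_general {S A : Type*} [MetricSpace S] (γ L ε : ℝ)
    (hγ0 : 0 < γ) (hL : 0 < L) (hε : 0 < ε)
    (Q r : S × A → ℝ) (V : S → ℝ) (f : S × A → S)
    (hbell : ∀ s a, Q (s, a) = r (s, a) + γ * V (f (s, a)))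
    (hrev : ∀ s₁ s₂ : S, s₁ ≠ s₂ → L * dist s₁ s₂ < |V s₁ - V s₂|)
    (Qhat : S × A → ℝ) (Vhat : S → ℝ)
    (hQ : ∀ s a, |Qhat (s, a) - Q (s, a)| ≤ ε)
    (hVe : ∀ x, |Vhat x - V x| ≤ ε)
    (s : S) (a : A) (shat : S)
    (hshat : Vhat shat = (Qhat (s, a) - r (s, a)) / γ) :
    dist (f (s, a)) shat < ((1 + γ) / (γ * L)) * ε := by
  have hsucc : V (f (s, a)) = (Q (s, a) - r (s, a)) / γ := by
    rw [hbell]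
    field_simp
    ring
  have hinferred : |Vhat shat - V (f (s, a))| ≤ ε / γ := by
    rw [hshat, hsucc, div_sub_div_same, sub_sub_sub_cancel_right, abs_div, abs_of_pos hγ0]
    exact div_le_div_of_nonneg_right (hQ s a) hγ0.le
  have hgap : |V (f (s, a)) - V shat| ≤ ε / γ + ε :=
    calc |V (f (s, a)) - V shat|
        ≤ |V (f (s, a)) - Vhat shat| + |Vhat shat - V shat| := abs_sub_le _ _ _
      _ ≤ ε / γ + ε := add_le_add (abs_sub_comm (Vhat shat) _ ▸ hinferred) (hVe shat)
  have hconst : (ε / γ + ε) / L = ((1 + γ) / (γ * L)) * ε := by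
    field_simp
  exact hconst ▸ ReverseLipschitzWith.dist_lt_of_abs_sub_le hrev hL (by positivity) hgap

/-- Theorem 1: with an ε-accurate value function whose true counterpart is reverse
Lipschitz with constant `L`, any state `ŝ'` whose estimated value matches the scanned
value lies within `((1 + γ) / (γ * L)) * ε` of the true successor state. -/
theorem stmt_2 {S A : Type*} [MetricSpace S] (γ L ε : ℝ)
    (hγ0 : 0 < γ) (hγ1 : γ < 1) (hL : 0 < L) (hε : 0 < ε)
    (Q r : S × A → ℝ) (V : S → ℝ) (f : S × A → S)
    (hbell : ∀ s a, Q (s, a) = r (s, a) + γ * V (f (s, a)))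
    (hrev : ∀ s₁ s₂ : S, s₁ ≠ s₂ → L * dist s₁ s₂ < |V s₁ - V s₂|)
    (Qhat : S × A → ℝ) (Vhat : S → ℝ)
    (hQ : ∀ s a, |Qhat (s, a) - Q (s, a)| ≤ ε)
    (hVe : ∀ x, |Vhat x - V x| ≤ ε)
    (s : S) (a : A) (shat : S)
    (hshat : Vhat shat = (Qhat (s, a) - r (s, a)) / γ) :
    dist (f (s, a)) shat < ((1 + γ) / (γ * L)) * ε :=
  stmt_2_general γ L ε hγ0 hL hε Q r V f hbell hrev Qhat Vhat hQ hVe s a shat hshat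
end

section
/- Let S and A be types, γ ∈ (0,1), δ > 0, ε ≥ 0. Let Q : S × A → ℝ, r : S × A → ℝ, V : S → ℝ, f : S × A → S satisfy Q(s,a) = r(s,a) + γ·V(f(s,a)) for all s, a, and suppose V is δ-separable, i.e. |V(s) − V(x)| > δ for all s ≠ x. Let Q̂ : S × A → ℝ and V̂ : S → ℝ satisfy |Q̂(s,a) − Q(s,a)| ≤ ε for all s, a and |V̂(x) − V(x)| ≤ ε for all x. If ε < δ/(2/γ + 2), then for every s ∈ S and a ∈ A, the successor state f(s,a) is the strict minimizer of x ↦ |V̂(x) − (Q̂(s,a) − r(s,a))/γ|: for every x ≠ f(s,a), |V̂(x) − (Q̂(s,a) − r(s,a))/γ| > |V̂(f(s,a)) − (Q̂(s,a) − r(s,a))/γ|. -/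
/-!
The scanned value `(Q̂(s,a) - r(s,a)) / γ` is within `ε / γ` of `V(f(s,a))`, and `V̂` is within `ε`
of `V`, so the candidate `f(s,a)` lies within `ε + ε / γ` of the scanned value, while by the triangle
inequality every other state `x` lies farther than `δ - (ε + ε / γ)` from it. The condition
`ε < δ / (2 / γ + 2)` says exactly that `2 (ε + ε / γ) < δ`.
-/

lemma dist_lt_dist_of_separated {M : Type*} [PseudoMetricSpace M] {a b p q u : M} {ε η δ : ℝ}
    (ha : dist a p ≤ ε) (hb : dist b q ≤ ε) (hu : dist u q ≤ η) (hpq : δ < dist p q)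
    (hgap : 2 * (ε + η) ≤ δ) : dist b u < dist a u := by
  have hbu : dist b u ≤ ε + η := by
    linarith [dist_triangle b q u, dist_comm u q]
  have hau : dist p q ≤ dist a u + ε + η := by
    linarith [dist_triangle4 p a u q, dist_comm p a]
  linarith

lemma abs_div_sub_le_of_eq_add_mul {γ ε q q' r v : ℝ} (hγ : 0 < γ) (hq : q = r + γ * v)
    (hq' : |q' - q| ≤ ε) : |(q' - r) / γ - v| ≤ ε / γ := by
  have hscan : (q' - r) / γ - v = (q' - q) / γ := by
    rw [hq]
    field_simp
    ring
  rw [hscan, abs_div, abs_of_pos hγ]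
  gcongr

theorem stmt_3_general {S A : Type*} (γ δ ε : ℝ)
    (hγ0 : 0 < γ)
    (Q r : S × A → ℝ) (V : S → ℝ) (f : S × A → S)
    (hbell : ∀ s a, Q (s, a) = r (s, a) + γ * V (f (s, a)))
    (hsep : ∀ s x : S, s ≠ x → δ < |V s - V x|)
    (Qhat : S × A → ℝ) (Vhat : S → ℝ)
    (hQ : ∀ s a, |Qhat (s, a) - Q (s, a)| ≤ ε)
    (hVe : ∀ x, |Vhat x - V x| ≤ ε)
    (hεδ : ε < δ / (2 / γ + 2)) :
    ∀ (s : S) (a : A) (x : S), x ≠ f (s, a) →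
      |Vhat (f (s, a)) - (Qhat (s, a) - r (s, a)) / γ| <
        |Vhat x - (Qhat (s, a) - r (s, a)) / γ| := by
  intro s a x hx
  have hscan := abs_div_sub_le_of_eq_add_mul hγ0 (hbell s a) (hQ s a)
  have hgap : 2 * (ε + ε / γ) ≤ δ := by
    have hεδ' := (lt_div_iff₀ (by positivity : (0 : ℝ) < 2 / γ + 2)).mp hεδ
    have hexpand : ε * (2 / γ + 2) = 2 * (ε + ε / γ) := by ring
    linarith
  simp only [← Real.dist_eq] at hscan hsep hVe ⊢
  exact dist_lt_dist_of_separated (hVe x) (hVe _) hscan (hsep x _ hx) hgap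

/-- Theorem 2 (Successor-State Identifiability): if the true value function is
δ-separable and `ε < δ / (2/γ + 2)`, then the true successor state is the strict
minimizer of the distance between the estimated value and the scanned value. -/
theorem stmt_3 {S A : Type*} (γ δ ε : ℝ)
    (hγ0 : 0 < γ) (hγ1 : γ < 1) (hδ : 0 < δ) (hε : 0 ≤ ε)
    (Q r : S × A → ℝ) (V : S → ℝ) (f : S × A → S)
    (hbell : ∀ s a, Q (s, a) = r (s, a) + γ * V (f (s, a)))
    (hsep : ∀ s x : S, s ≠ x → δ < |V s - V x|)
    (Qhat : S × A → ℝ) (Vhat : S → ℝ)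
    (hQ : ∀ s a, |Qhat (s, a) - Q (s, a)| ≤ ε)
    (hVe : ∀ x, |Vhat x - V x| ≤ ε)
    (hεδ : ε < δ / (2 / γ + 2)) :
    ∀ (s : S) (a : A) (x : S), x ≠ f (s, a) →
      |Vhat (f (s, a)) - (Qhat (s, a) - r (s, a)) / γ| <
        |Vhat x - (Qhat (s, a) - r (s, a)) / γ| :=
  stmt_3_general γ δ ε hγ0 Q r V f hbell hsep Qhat Vhat hQ hVe hεδ
end

section
/- Let S be a metric space, let γ ∈ (0,1), and let V : S → ℝ, r : S → ℝ, f : S → S satisfy the state-value Bellman equation V(s) = r(s) + γ·V(f(s)) for all s ∈ S. Suppose r is reverse Lipschitz with constant L_r > 0, i.e. |r(s₁) − r(s₂)| > L_r·dist(s₁, s₂) for all s₁ ≠ s₂; f is Lipschitz with constant L_p ≥ 0; V is Lipschitz with constant L_V ≥ 0; and γ·L_V·L_p < L_r. Then V is reverse Lipschitz with constant L_r − γ·L_V·L_p: for all s₁ ≠ s₂, |V(s₁) − V(s₂)| > (L_r − γ·L_V·L_p)·dist(s₁, s₂). -/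
/-!
Subtracting the Bellman equation at two states gives
`r s₁ - r s₂ = (V s₁ - V s₂) - γ (V (f s₁) - V (f s₂))`, so by the triangle inequality the
reward gap is at most the value gap plus `γ L_V L_p dist s₁ s₂`; the reverse Lipschitz bound on
`r` then passes to `V` with the constant reduced by `γ L_V L_p`.
-/

lemma abs_sub_le_of_bellman {S : Type*} {γ : ℝ} (hγ : 0 ≤ γ) {V r : S → ℝ} {f : S → S}
    (hbell : ∀ s, V s = r s + γ * V (f s)) (s₁ s₂ : S) :
    |r s₁ - r s₂| ≤ |V s₁ - V s₂| + γ * |V (f s₁) - V (f s₂)| := by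
  have hdiff : r s₁ - r s₂ = (V s₁ - V s₂) - γ * (V (f s₁) - V (f s₂)) := by
    rw [hbell s₁, hbell s₂]; ring
  calc |r s₁ - r s₂| ≤ |V s₁ - V s₂| + |γ * (V (f s₁) - V (f s₂))| := hdiff ▸ abs_sub _ _
    _ = |V s₁ - V s₂| + γ * |V (f s₁) - V (f s₂)| := by rw [abs_mul, abs_of_nonneg hγ]

lemma abs_sub_comp_le {α β : Type*} [PseudoMetricSpace α] [PseudoMetricSpace β]
    {g : β → ℝ} {f : α → β} {Kg Kf : ℝ} (hKg : 0 ≤ Kg)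
    (hg : ∀ y₁ y₂, |g y₁ - g y₂| ≤ Kg * dist y₁ y₂)
    (hf : ∀ x₁ x₂, dist (f x₁) (f x₂) ≤ Kf * dist x₁ x₂) (x₁ x₂ : α) :
    |g (f x₁) - g (f x₂)| ≤ Kg * Kf * dist x₁ x₂ :=
  calc |g (f x₁) - g (f x₂)| ≤ Kg * dist (f x₁) (f x₂) := hg _ _
    _ ≤ Kg * (Kf * dist x₁ x₂) := mul_le_mul_of_nonneg_left (hf _ _) hKg
    _ = Kg * Kf * dist x₁ x₂ := (mul_assoc _ _ _).symm

theorem stmt_4_general {S : Type*} [MetricSpace S] (γ : ℝ) (hγ0 : 0 < γ)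
    (V r : S → ℝ) (f : S → S)
    (hbell : ∀ s, V s = r s + γ * V (f s))
    (Lr Lp LV : ℝ) (hLV : 0 ≤ LV)
    (hr : ∀ s₁ s₂ : S, s₁ ≠ s₂ → Lr * dist s₁ s₂ < |r s₁ - r s₂|)
    (hf : ∀ s₁ s₂ : S, dist (f s₁) (f s₂) ≤ Lp * dist s₁ s₂)
    (hVlip : ∀ s₁ s₂ : S, |V s₁ - V s₂| ≤ LV * dist s₁ s₂) :
    ∀ s₁ s₂ : S, s₁ ≠ s₂ → (Lr - γ * LV * Lp) * dist s₁ s₂ < |V s₁ - V s₂| := by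
  intro s₁ s₂ hne
  have hnext := mul_le_mul_of_nonneg_left (abs_sub_comp_le hLV hVlip hf s₁ s₂) hγ0.le
  linarith [hr s₁ s₂ hne, abs_sub_le_of_bellman hγ0.le hbell s₁ s₂]

/-- Deterministic instance of Lemma 1 (after Rachelson & Lagoudakis): if the reward
is reverse Lipschitz with constant `L_r`, the dynamics are `L_p`-Lipschitz, the value
function is `L_V`-Lipschitz and `γ * L_V * L_p < L_r`, then the value function is
reverse Lipschitz with constant `L_r - γ * L_V * L_p`. -/
theorem stmt_4 {S : Type*} [MetricSpace S] (γ : ℝ) (hγ0 : 0 < γ) (hγ1 : γ < 1)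
    (V r : S → ℝ) (f : S → S)
    (hbell : ∀ s, V s = r s + γ * V (f s))
    (Lr Lp LV : ℝ) (hLr : 0 < Lr) (hLp : 0 ≤ Lp) (hLV : 0 ≤ LV)
    (hr : ∀ s₁ s₂ : S, s₁ ≠ s₂ → Lr * dist s₁ s₂ < |r s₁ - r s₂|)
    (hf : ∀ s₁ s₂ : S, dist (f s₁) (f s₂) ≤ Lp * dist s₁ s₂)
    (hVlip : ∀ s₁ s₂ : S, |V s₁ - V s₂| ≤ LV * dist s₁ s₂)
    (hgap : γ * LV * Lp < Lr) :
    ∀ s₁ s₂ : S, s₁ ≠ s₂ → (Lr - γ * LV * Lp) * dist s₁ s₂ < |V s₁ - V s₂| :=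
  stmt_4_general γ hγ0 V r f hbell Lr Lp LV hLV hr hf hVlip
end
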